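/- Let P⁰ be an N_f×N_c real matrix, let D_{1,h}, D_{2,h} be N_f×N_f diagonal matrices with nonzero diagonal entries, and let D_{1,H}, D_{2,H} be N_c×N_c diagonal matrices with nonzero diagonal entries. Define R := D_{1,H} (P⁰)ᵀ D_{1,h}⁻¹, P := D_{2,h}⁻¹ P⁰ D_{2,H}, M_h := D_{1,h}⁻¹ D_{2,h} and M_H := D_{1,H}⁻¹ D_{2,H}. Then Pᵀ M_h = M_H R; equivalently, for all x ∈ ℝ^{N_c} and y ∈ ℝ^{N_f}, ⟨P x, y⟩_{M_h} = ⟨x, R y⟩_{M_H}, where ⟨u, v⟩_M := uᵀ M v. That is, the restriction R is the adjoint of the prolongation P with respect to the weighted inner products induced by D_{1,h}⁻¹ D_{2,h} on the fine grid and D_{1,H}⁻¹ D_{2,H} on the coarse grid. -/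
import Mathlib

open Matrix

lemma diag_inv {n : ℕ} (d : Fin n → ℝ) (hd : ∀ i, d i ≠ 0) :
    (Matrix.diagonal d)⁻¹ = Matrix.diagonal (fun i => (d i)⁻¹) := by
  apply Matrix.inv_eq_right_inv
  rw [Matrix.diagonal_mul_diagonal]
  convert Matrix.diagonal_one
  exact mul_inv_cancel₀ (hd _)

theorem restriction_adjoint_of_prolongation (Nf Nc : ℕ)
    (P0 : Matrix (Fin Nf) (Fin Nc) ℝ)
    (d1h d2h : Fin Nf → ℝ) (hd1h : ∀ i, d1h i ≠ 0) (hd2h : ∀ i, d2h i ≠ 0)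
    (d1H d2H : Fin Nc → ℝ) (hd1H : ∀ i, d1H i ≠ 0) (hd2H : ∀ i, d2H i ≠ 0)
    (R : Matrix (Fin Nc) (Fin Nf) ℝ) (P : Matrix (Fin Nf) (Fin Nc) ℝ)
    (Mh : Matrix (Fin Nf) (Fin Nf) ℝ) (MH : Matrix (Fin Nc) (Fin Nc) ℝ)
    (hR : R = Matrix.diagonal d1H * P0ᵀ * (Matrix.diagonal d1h)⁻¹)
    (hP : P = (Matrix.diagonal d2h)⁻¹ * P0 * Matrix.diagonal d2H)
    (hMh : Mh = (Matrix.diagonal d1h)⁻¹ * Matrix.diagonal d2h)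
    (hMH : MH = (Matrix.diagonal d1H)⁻¹ * Matrix.diagonal d2H) :
    Pᵀ * Mh = MH * R ∧
    ∀ (x : Fin Nc → ℝ) (y : Fin Nf → ℝ),
      (P *ᵥ x) ⬝ᵥ (Mh *ᵥ y) = x ⬝ᵥ (MH *ᵥ (R *ᵥ y)) := by
  have key : Pᵀ * Mh = MH * R := by
    subst hR hP hMh hMH
    rw [diag_inv _ hd1h, diag_inv _ hd2h, diag_inv _ hd1H]
    ext i j
    simp only [Matrix.transpose_mul, Matrix.diagonal_transpose, Matrix.mul_apply,
      Matrix.diagonal_apply, Ring.inverse_eq_inv', Ring.inverse_eq_inv, Pi.inv_apply, ite_mul, mul_ite,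
      mul_zero, zero_mul, Finset.sum_ite_eq, Finset.sum_ite_eq', Finset.mem_univ, if_true]
    rw [show d2H i * (P0ᵀ i j * (d2h j)⁻¹) * ((d1h j)⁻¹ * d2h j)
        = d2H i * (P0ᵀ i j * (d1h j)⁻¹) * ((d2h j)⁻¹ * d2h j) by ring,
      show (d1H i)⁻¹ * d2H i * (d1H i * P0ᵀ i j * (d1h j)⁻¹)
        = d2H i * (P0ᵀ i j * (d1h j)⁻¹) * ((d1H i)⁻¹ * d1H i) by ring,
      inv_mul_cancel₀ (hd2h j), inv_mul_cancel₀ (hd1H i)]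
  refine ⟨key, fun x y => ?_⟩
  calc (P *ᵥ x) ⬝ᵥ (Mh *ᵥ y) = x ⬝ᵥ ((Pᵀ * Mh) *ᵥ y) := by
        rw [Matrix.dotProduct_mulVec x, ← Matrix.vecMul_vecMul, Matrix.vecMul_transpose, Matrix.dotProduct_mulVec]
    _ = x ⬝ᵥ (MH *ᵥ (R *ᵥ y)) := by rw [key, Matrix.mulVec_mulVec]
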